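/- arXiv:2202.05422 — 5 statements merged into one kernel-verified Lean document; each statement's English description precedes it below -/
import Mathlib

section
/- Let K_n be the n×n Gaussian kernel matrix with entries (K_n)_{ij} = exp(−‖x_i − x_j‖²/θ) built from points x_1,…,x_n ∈ ℝᵖ with fixed parameter θ > 0. If the design points satisfy ‖x_i − x_j‖² ≥ 2θ log n for all i ≠ j, then (1 − 1/n) I_n ≤ K_n ≤ (1 + 1/n) I_n in the positive semidefinite order, i.e., for every c ∈ ℝⁿ, (1 − 1/n) cᵀc ≤ cᵀK_n c ≤ (1 + 1/n) cᵀc. -/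
open Matrix

/-- **Gaussian kernel bounds.** If the design points `x 1, …, x n ∈ ℝᵖ` satisfy
`‖x i − x j‖² ≥ 2 θ log n` for all `i ≠ j`, then the Gaussian kernel matrix
`(K n)_{ij} = exp(−‖x i − x j‖² / θ)` satisfies `(1 − 1/n) Iₙ ≤ Kₙ ≤ (1 + 1/n) Iₙ`
in the positive semidefinite order, i.e. for every `c ∈ ℝⁿ`,
`(1 − 1/n) cᵀc ≤ cᵀ Kₙ c ≤ (1 + 1/n) cᵀc`. -/
theorem gaussian_kernel_psd_bounds (n p : ℕ) (θ : ℝ) (hθ : 0 < θ)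
    (x : Fin n → EuclideanSpace ℝ (Fin p))
    (K : Matrix (Fin n) (Fin n) ℝ)
    (hK : ∀ i j, K i j = Real.exp (-‖x i - x j‖ ^ 2 / θ))
    (hsep : ∀ i j, i ≠ j → 2 * θ * Real.log n ≤ ‖x i - x j‖ ^ 2) :
    ∀ c : Fin n → ℝ,
      (1 - 1 / (n : ℝ)) * (c ⬝ᵥ c) ≤ c ⬝ᵥ (K *ᵥ c) ∧
        c ⬝ᵥ (K *ᵥ c) ≤ (1 + 1 / (n : ℝ)) * (c ⬝ᵥ c) := by
  intro c
  rcases Nat.eq_zero_or_pos n with hn | hn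
  · subst hn
    simp [dotProduct]
  have hnpos : (0:ℝ) < n := by exact_mod_cast hn
  -- diagonal entries are 1
  have hdiag : ∀ i, K i i = 1 := by
    intro i; simp [hK]
  -- off-diagonal entries are in (0, 1/n²]
  have hKpos : ∀ i j, 0 < K i j := by
    intro i j; rw [hK]; exact Real.exp_pos _
  have hoff : ∀ i j, i ≠ j → K i j ≤ 1 / (n:ℝ)^2 := by
    intro i j hij
    rw [hK]
    have h1 : -‖x i - x j‖ ^ 2 / θ ≤ -(2 * Real.log n) := by
      rw [neg_div, neg_le_neg_iff, le_div_iff₀ hθ]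
      nlinarith [hsep i j hij]
    calc Real.exp (-‖x i - x j‖ ^ 2 / θ) ≤ Real.exp (-(2 * Real.log n)) :=
          Real.exp_le_exp.2 h1
      _ = 1 / (n:ℝ)^2 := by
          rw [Real.exp_neg, two_mul, Real.exp_add, Real.exp_log hnpos, one_div, sq]
  -- rewrite the quadratic form
  have hform : c ⬝ᵥ (K *ᵥ c) =
      c ⬝ᵥ c + ∑ i, ∑ j, (if i = j then 0 else c i * K i j * c j) := by
    simp only [dotProduct, mulVec, Finset.mul_sum]
    rw [← Finset.sum_add_distrib]
    refine Finset.sum_congr rfl fun i _ => ?_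
    have : ∀ j, c i * (K i j * c j) =
        (if i = j then c i * c i else 0) + (if i = j then 0 else c i * K i j * c j) := by
      intro j
      by_cases h : i = j
      · subst h; simp [hdiag i]
      · simp [h]; ring
    rw [Finset.sum_congr rfl fun j _ => this j, Finset.sum_add_distrib,
      Finset.sum_ite_eq Finset.univ i (fun _ => c i * c i)]
    simp
  set E := ∑ i, ∑ j, (if i = j then 0 else c i * K i j * c j) with hE
  -- bound |E|
  have habs : |E| ≤ (1 / (n:ℝ)) * (c ⬝ᵥ c) := by
    have h1 : |E| ≤ ∑ i, ∑ j, |c i| * |c j| / (n:ℝ)^2 := by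
      calc |E| ≤ ∑ i, |∑ j, (if i = j then 0 else c i * K i j * c j)| :=
            Finset.abs_sum_le_sum_abs _ _
        _ ≤ ∑ i, ∑ j, |if i = j then 0 else c i * K i j * c j| :=
            Finset.sum_le_sum fun i _ => Finset.abs_sum_le_sum_abs _ _
        _ ≤ ∑ i, ∑ j, |c i| * |c j| / (n:ℝ)^2 := by
            refine Finset.sum_le_sum fun i _ => Finset.sum_le_sum fun j _ => ?_
            by_cases h : i = j
            · simp only [h, if_true, abs_zero]
              positivity
            · simp only [h, if_false, abs_mul]
              rw [abs_of_pos (hKpos i j)]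
              have := hoff i j h
              have h2 : |c i| * K i j * |c j| ≤ |c i| * (1/(n:ℝ)^2) * |c j| := by
                gcongr
              calc |c i| * K i j * |c j| ≤ |c i| * (1/(n:ℝ)^2) * |c j| := h2
                _ = |c i| * |c j| / (n:ℝ)^2 := by ring
    have h2 : ∑ i, ∑ j, |c i| * |c j| / (n:ℝ)^2 = (∑ i, |c i|)^2 / (n:ℝ)^2 := by
      rw [sq (∑ i, |c i|), Finset.sum_mul_sum, Finset.sum_div]
      refine Finset.sum_congr rfl fun i _ => ?_
      rw [Finset.sum_div]
    have h3 : (∑ i, |c i|)^2 ≤ (n:ℝ) * ∑ i, |c i|^2 := by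
      have := sq_sum_le_card_mul_sum_sq (s := (Finset.univ : Finset (Fin n)))
        (f := fun i => |c i|)
      simpa using this
    have h4 : ∑ i, |c i|^2 = c ⬝ᵥ c := by
      simp [dotProduct, sq_abs, sq]
    calc |E| ≤ (∑ i, |c i|)^2 / (n:ℝ)^2 := h1.trans (le_of_eq h2)
      _ ≤ ((n:ℝ) * (c ⬝ᵥ c)) / (n:ℝ)^2 := by
          rw [h4] at h3
          gcongr
      _ = (1 / (n:ℝ)) * (c ⬝ᵥ c) := by
          field_simp
  rw [hform]
  rw [abs_le] at habs
  constructor <;> nlinarith [habs.1, habs.2]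
end

section
/- Let θ ∈ [a_L, a_U] with a_L > 1/2, and let K_n be the n×n polynomial kernel matrix with entries (K_n)_{ij} = (x_i·x_j + 1)^θ built from points x_1,…,x_n ∈ ℝᵖ. Suppose the design satisfies |(x_i·x_i + 1)/p − 1| ≤ 1/(2 a_U n) for all i and |(x_i·x_j + 1)/p| ≤ 1/n⁴ for all i ≠ j. Then there exists N > 0 such that for all n > N, (1 − 1/n) I_n ≤ p^{−θ} K_n ≤ (1 + 1/n) I_n in the positive semidefinite order, simultaneously for all θ ∈ [a_L, a_U]. -/
open Matrix

lemma diag_aux (aU θ : ℝ) (haU : 1/2 < aU) (hθ0 : 0 < θ) (hθ2 : θ ≤ aU)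
    (n : ℕ) (hn : 4 ≤ n) (r : ℝ) (hr : |r - 1| ≤ 1/(2*aU*n)) :
    |r ^ θ - 1| ≤ 2/(3*n) := by
  have hn' : (4:ℝ) ≤ (n:ℝ) := by exact_mod_cast hn
  have hn0 : (0:ℝ) < n := by linarith
  have haU0 : (0:ℝ) < aU := by linarith
  have hδ0 : (0:ℝ) ≤ 1/(2*aU*n) := by positivity
  have hδδ : 1/(2*aU*n) ≤ 1/(n:ℝ) := by
    apply one_div_le_one_div_of_le hn0
    nlinarith
  have hδn : 1/(2*aU*(n:ℝ)) ≤ 1/4 := by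
    refine hδδ.trans ?_
    exact one_div_le_one_div_of_le (by norm_num) hn'
  have hr1 := abs_le.mp hr
  have hr34 : (3:ℝ)/4 ≤ r := by linarith [hr1.1]
  have hr0 : (0:ℝ) < r := by linarith
  have hrθ : r ^ θ = Real.exp (Real.log r * θ) := Real.rpow_def_of_pos hr0 θ
  have hlup : Real.log r ≤ r - 1 := Real.log_le_sub_one_of_pos hr0
  have hllo : 1 - r⁻¹ ≤ Real.log r := by
    have := Real.log_le_sub_one_of_pos (inv_pos.mpr hr0)
    rw [Real.log_inv] at this
    linarith
  have hθδ : θ * (1/(2*aU*n)) ≤ 1/(2*(n:ℝ)) := by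
    rw [mul_one_div, div_le_div_iff₀ (by positivity) (by positivity)]
    nlinarith
  -- upper bound
  have hup : r ^ θ ≤ 1 + 2/(3*(n:ℝ)) := by
    rw [hrθ]
    have h1 : Real.log r * θ ≤ 1/(2*(n:ℝ)) := by
      have h1a : Real.log r * θ ≤ (1/(2*aU*n)) * θ := by
        apply mul_le_mul_of_nonneg_right _ hθ0.le
        linarith [hr1.2]
      have h1b : (1/(2*aU*(n:ℝ))) * θ = θ * (1/(2*aU*n)) := mul_comm _ _
      linarith
    have h2 : Real.exp (Real.log r * θ) ≤ Real.exp (1/(2*(n:ℝ))) := Real.exp_le_exp.mpr h1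
    have h5 : (0:ℝ) < 1 - 1/(2*(n:ℝ)) := by
      have : 1/(2*(n:ℝ)) ≤ 1/8 := one_div_le_one_div_of_le (by norm_num) (by linarith)
      linarith
    have h3 : Real.exp (1/(2*(n:ℝ))) * (1 - 1/(2*(n:ℝ))) ≤ 1 := by
      have h4 : 1 - 1/(2*(n:ℝ)) ≤ Real.exp (-(1/(2*(n:ℝ)))) := by
        have := Real.add_one_le_exp (-(1/(2*(n:ℝ)))); linarith
      calc Real.exp (1/(2*(n:ℝ))) * (1 - 1/(2*(n:ℝ)))
          ≤ Real.exp (1/(2*(n:ℝ))) * Real.exp (-(1/(2*(n:ℝ)))) :=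
            mul_le_mul_of_nonneg_left h4 (Real.exp_pos _).le
        _ = 1 := by rw [← Real.exp_add]; simp
    have h6 : Real.exp (1/(2*(n:ℝ))) ≤ 1/(1 - 1/(2*(n:ℝ))) := by
      rw [le_div_iff₀ h5]; exact h3
    have h7 : 1/(1 - 1/(2*(n:ℝ))) ≤ 1 + 2/(3*(n:ℝ)) := by
      rw [div_le_iff₀ h5]
      have hne : (n:ℝ) ≠ 0 := hn0.ne'
      field_simp
      nlinarith
    linarith
  -- lower bound
  have hlo : 1 - 2/(3*(n:ℝ)) ≤ r ^ θ := by
    rw [hrθ]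
    have hrinv : r⁻¹ ≤ 4/3 := by
      have h := inv_anti₀ (by norm_num : (0:ℝ) < 3/4) hr34
      norm_num at h
      linarith
    have hid : 1 - r⁻¹ = (r - 1) * r⁻¹ := by field_simp
    have P1 : 0 ≤ (r - 1 + 1/(2*aU*n)) * r⁻¹ :=
      mul_nonneg (by linarith [hr1.1]) (inv_pos.mpr hr0).le
    have P2 : (1/(2*aU*(n:ℝ))) * r⁻¹ ≤ (1/(2*aU*n)) * (4/3) :=
      mul_le_mul_of_nonneg_left hrinv hδ0
    have hA : -(1/(2*aU*(n:ℝ))) * (4/3) ≤ Real.log r := by nlinarith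
    have hB : (-(1/(2*aU*(n:ℝ))) * (4/3)) * θ ≤ Real.log r * θ :=
      mul_le_mul_of_nonneg_right hA hθ0.le
    have hC : -(2/(3*(n:ℝ))) ≤ (-(1/(2*aU*(n:ℝ))) * (4/3)) * θ := by
      have : (-(1/(2*aU*(n:ℝ))) * (4/3)) * θ = -((4/3) * (θ * (1/(2*aU*n)))) := by ring
      rw [this]
      have hne : (n:ℝ) ≠ 0 := hn0.ne'
      have e : (4:ℝ)/3 * (1/(2*(n:ℝ))) = 2/(3*n) := by field_simp; ring
      linarith [hθδ, e]
    have := Real.add_one_le_exp (Real.log r * θ)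
    linarith
  exact abs_le.mpr ⟨by linarith, by linarith⟩

lemma off_aux (aL θ : ℝ) (haL : 0 < aL) (hθ1 : aL ≤ θ)
    (n : ℕ) (hn : 1 ≤ n) (q : ℝ) (hq0 : 0 < q) (a : ℝ)
    (ha : |a / q| ≤ 1 / (n:ℝ)^4) :
    |q ^ (-θ) * a ^ θ| ≤ (1/(n:ℝ)^4) ^ aL := by
  have hθ0 : (0:ℝ) < θ := lt_of_lt_of_le haL hθ1
  have hn0 : (0:ℝ) < n := by exact_mod_cast hn
  have h1 : |q ^ (-θ) * a ^ θ| = q ^ (-θ) * |a ^ θ| := by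
    rw [abs_mul, abs_of_pos (Real.rpow_pos_of_pos hq0 _)]
  have h2 : |a ^ θ| ≤ |a| ^ θ := Real.abs_rpow_le_abs_rpow a θ
  have h3 : q ^ (-θ) * |a| ^ θ = |a/q| ^ θ := by
    rw [abs_div, abs_of_pos hq0, Real.div_rpow (abs_nonneg a) hq0.le, Real.rpow_neg hq0.le]
    ring
  calc |q ^ (-θ) * a ^ θ| = q ^ (-θ) * |a ^ θ| := h1
    _ ≤ q ^ (-θ) * |a| ^ θ :=
        mul_le_mul_of_nonneg_left h2 (Real.rpow_pos_of_pos hq0 _).le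
    _ = |a/q| ^ θ := h3
    _ ≤ (1/(n:ℝ)^4) ^ θ := Real.rpow_le_rpow (abs_nonneg _) ha hθ0.le
    _ ≤ (1/(n:ℝ)^4) ^ aL := by
        apply Real.rpow_le_rpow_of_exponent_ge (by positivity) _ hθ1
        rw [div_le_one (by positivity)]
        have h1n : (1:ℝ) ≤ (n:ℝ) := by exact_mod_cast hn
        calc (1:ℝ) = 1^4 := by norm_num
          _ ≤ (n:ℝ)^4 := by gcongr

set_option maxHeartbeats 1000000 in
/-- **Polynomial kernel bounds (Lemma 2).** Let `θ ∈ [a_L, a_U]` with `a_L > 1/2`, and let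
`Kₙ` be the polynomial kernel matrix `(Kₙ)_{ij} = (xᵢ·xⱼ + 1)^θ`. If the design satisfies
`|(xᵢ·xᵢ + 1)/p − 1| ≤ 1/(2 a_U n)` for all `i` and `|(xᵢ·xⱼ + 1)/p| ≤ 1/n⁴` for all `i ≠ j`,
then there exists `N > 0` such that for all `n > N` and all `θ ∈ [a_L, a_U]`,
`(1 − 1/n) Iₙ ≤ p^{−θ} Kₙ ≤ (1 + 1/n) Iₙ` in the positive semidefinite order. -/
theorem polynomial_kernel_psd_bounds (aL aU : ℝ) (haL : 1 / 2 < aL) (haLU : aL ≤ aU)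
    (p : ℕ → ℕ) (hp : ∀ n, 0 < p n)
    (x : (n : ℕ) → Fin n → (Fin (p n) → ℝ))
    (hdiag : ∀ n : ℕ, ∀ i : Fin n,
      |((x n i ⬝ᵥ x n i) + 1) / (p n : ℝ) - 1| ≤ 1 / (2 * aU * n))
    (hoff : ∀ n : ℕ, ∀ i j : Fin n, i ≠ j →
      |((x n i ⬝ᵥ x n j) + 1) / (p n : ℝ)| ≤ 1 / (n : ℝ) ^ 4) :
    ∃ N : ℕ, 0 < N ∧ ∀ n > N, ∀ θ ∈ Set.Icc aL aU, ∀ c : Fin n → ℝ,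
      (1 - 1 / (n : ℝ)) * (c ⬝ᵥ c) ≤
          c ⬝ᵥ (((p n : ℝ) ^ (-θ) • Matrix.of fun i j => ((x n i ⬝ᵥ x n j) + 1) ^ θ) *ᵥ c) ∧
        c ⬝ᵥ (((p n : ℝ) ^ (-θ) • Matrix.of fun i j => ((x n i ⬝ᵥ x n j) + 1) ^ θ) *ᵥ c) ≤
          (1 + 1 / (n : ℝ)) * (c ⬝ᵥ c) := by
  have haU : 1/2 < aU := lt_of_lt_of_le haL haLU
  have hε : (0:ℝ) < 4*aL - 2 := by linarith
  refine ⟨⌈(3:ℝ)^(1/(4*aL-2))⌉₊ + 4, by omega, ?_⟩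
  intro n hn θ hθ c
  obtain ⟨hθ1, hθ2⟩ := hθ
  have hθ0 : (0:ℝ) < θ := by linarith
  have hn4 : 4 ≤ n := by omega
  have hnR : (4:ℝ) ≤ (n:ℝ) := by exact_mod_cast hn4
  have hn0 : (0:ℝ) < (n:ℝ) := by linarith
  have hq0 : (0:ℝ) < (p n : ℝ) := by exact_mod_cast hp n
  -- abbreviations
  set E : ℝ := (1/(n:ℝ)^4) ^ aL with hEdef
  set D : ℝ := 2/(3*(n:ℝ)) with hDdef
  have hE0 : 0 ≤ E := Real.rpow_nonneg (by positivity) _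
  have hD0 : 0 ≤ D := by positivity
  -- n^(4aL-2) ≥ 3
  have h31 : (3:ℝ)^(1/(4*aL-2)) ≤ (n:ℝ) := by
    have h := Nat.le_ceil ((3:ℝ)^(1/(4*aL-2)))
    have h2 : (⌈(3:ℝ)^(1/(4*aL-2))⌉₊ : ℝ) ≤ (n:ℝ) := by
      exact_mod_cast (by omega : ⌈(3:ℝ)^(1/(4*aL-2))⌉₊ ≤ n)
    linarith
  have h3n : (3:ℝ) ≤ (n:ℝ)^(4*aL-2) := by
    calc (3:ℝ) = (3:ℝ)^((1/(4*aL-2))*(4*aL-2)) := by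
          rw [one_div_mul_cancel hε.ne', Real.rpow_one]
      _ = ((3:ℝ)^(1/(4*aL-2)))^(4*aL-2) := Real.rpow_mul (by norm_num) _ _
      _ ≤ (n:ℝ)^(4*aL-2) := Real.rpow_le_rpow (by positivity) h31 hε.le
  -- E = (n^(4aL))⁻¹ and 3n² ≤ n^(4aL)
  have hEeq : E = ((n:ℝ)^(4*aL : ℝ))⁻¹ := by
    rw [hEdef, one_div, ← Real.rpow_natCast (n:ℝ) 4, Real.inv_rpow (by positivity),
      ← Real.rpow_mul hn0.le]
    norm_num
  have hpow : 3*(n:ℝ)^2 ≤ (n:ℝ)^(4*aL : ℝ) := by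
    have h1 : (n:ℝ)^(4*aL : ℝ) = (n:ℝ)^(2:ℝ) * (n:ℝ)^(4*aL-2) := by
      rw [← Real.rpow_add hn0]; ring_nf
    have h2 : (n:ℝ)^(2:ℝ) = (n:ℝ)^2 := by
      rw [show ((2:ℝ)) = ((2:ℕ):ℝ) by norm_num, Real.rpow_natCast]
    rw [h1, h2]
    nlinarith [sq_nonneg (n:ℝ)]
  have hEn : ((n:ℝ)-1) * E ≤ 1/(3*(n:ℝ)) := by
    have hX0 : (0:ℝ) < (n:ℝ)^(4*aL:ℝ) := Real.rpow_pos_of_pos hn0 _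
    have h1 : E ≤ (3*(n:ℝ)^2)⁻¹ := by
      rw [hEeq]
      exact inv_anti₀ (by positivity) hpow
    calc ((n:ℝ)-1) * E ≤ ((n:ℝ)-1) * (3*(n:ℝ)^2)⁻¹ :=
          mul_le_mul_of_nonneg_left h1 (by linarith)
      _ ≤ 1/(3*(n:ℝ)) := by
          rw [← one_div, mul_one_div, div_le_div_iff₀ (by positivity) (by positivity)]
          nlinarith
  -- entry description
  set m : Fin n → Fin n → ℝ :=
    fun i j => (p n : ℝ) ^ (-θ) * ((x n i ⬝ᵥ x n j) + 1) ^ θ with hm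
  have hQ : c ⬝ᵥ (((p n : ℝ) ^ (-θ) • Matrix.of fun i j => ((x n i ⬝ᵥ x n j) + 1) ^ θ) *ᵥ c)
      = ∑ i, ∑ j, c i * m i j * c j := by
    simp only [dotProduct, mulVec, Matrix.smul_apply, of_apply, smul_eq_mul, Finset.mul_sum, hm]
    exact Finset.sum_congr rfl fun i _ => Finset.sum_congr rfl fun j _ => by ring
  have hS : c ⬝ᵥ c = ∑ i, (c i)^2 := by
    simp [dotProduct, sq]
  have hS0 : (0:ℝ) ≤ ∑ i, (c i)^2 := Finset.sum_nonneg fun i _ => sq_nonneg _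
  -- entry bounds
  have hdiag' : ∀ i : Fin n, |m i i - 1| ≤ D := by
    intro i
    have hra := hdiag n i
    have hδn : 1/(2*aU*(n:ℝ)) ≤ 1/4 := by
      have h1 : 1/(2*aU*(n:ℝ)) ≤ 1/(n:ℝ) := by
        apply one_div_le_one_div_of_le hn0; nlinarith
      have h2 : 1/(n:ℝ) ≤ 1/4 := one_div_le_one_div_of_le (by norm_num) hnR
      linarith
    have hrpos : (0:ℝ) < ((x n i ⬝ᵥ x n i) + 1) / (p n : ℝ) := by
      have := abs_le.mp hra
      linarith [this.1]
    have ha0 : (0:ℝ) ≤ (x n i ⬝ᵥ x n i) + 1 := by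
      by_contra hcon
      push_neg at hcon
      have : ((x n i ⬝ᵥ x n i) + 1) / (p n : ℝ) < 0 := div_neg_of_neg_of_pos hcon hq0
      linarith
    have hmval : m i i = (((x n i ⬝ᵥ x n i) + 1) / (p n : ℝ)) ^ θ := by
      rw [hm]
      simp only []
      rw [Real.div_rpow ha0 hq0.le, Real.rpow_neg hq0.le]
      ring
    rw [hmval]
    exact diag_aux aU θ haU hθ0 hθ2 n hn4 _ hra
  have hoff' : ∀ i j : Fin n, i ≠ j → |m i j| ≤ E :=
    fun i j hij => off_aux aL θ (by linarith) hθ1 n (by omega) _ hq0 _ (hoff n i j hij)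
  -- termwise bound
  set e : Fin n → Fin n → ℝ := fun i j => if i = j then D else E with he
  have hterm : ∀ i j : Fin n,
      |c i * (m i j - if i = j then 1 else 0) * c j| ≤ ((c i)^2 + (c j)^2)/2 * e i j := by
    intro i j
    simp only [he]
    by_cases h : i = j
    · subst h
      rw [if_pos rfl, if_pos rfl]
      have h1 : |c i * (m i i - 1) * c i| = (c i)^2 * |m i i - 1| := by
        rw [abs_mul, abs_mul, ← sq_abs]; ring
      rw [h1]
      have h2 : (c i)^2 * |m i i - 1| ≤ (c i)^2 * D :=
        mul_le_mul_of_nonneg_left (hdiag' i) (sq_nonneg _)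
      calc (c i)^2 * |m i i - 1| ≤ (c i)^2 * D := h2
        _ = ((c i)^2 + (c i)^2)/2 * D := by ring
    · rw [if_neg h, if_neg h]
      have h1 : |c i * (m i j - 0) * c j| = (|c i| * |c j|) * |m i j| := by
        rw [sub_zero, abs_mul, abs_mul]; ring
      rw [h1]
      have h2 : |c i| * |c j| ≤ ((c i)^2 + (c j)^2)/2 := by
        nlinarith [sq_nonneg (|c i| - |c j|), sq_abs (c i), sq_abs (c j)]
      exact mul_le_mul h2 (hoff' i j h) (abs_nonneg _) (by positivity)
  -- symmetry of e
  have esymm : ∀ i j : Fin n, e i j = e j i := by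
    intro i j
    by_cases h : i = j
    · subst h; rfl
    · simp only [he]
      rw [if_neg h, if_neg (show ¬ j = i from fun hh => h hh.symm)]
  -- row sums
  have hrow : ∀ i : Fin n, ∑ j, e i j = D + ((n:ℝ)-1) * E := by
    intro i
    have h1 : ∀ j : Fin n, e i j = E + (if i = j then D - E else 0) := by
      intro j; by_cases h : i = j
      · simp only [he, if_pos h]; ring
      · simp only [he, if_neg h]; ring
    rw [Finset.sum_congr rfl fun j _ => h1 j, Finset.sum_add_distrib, Finset.sum_const,
      Finset.sum_ite_eq, if_pos (Finset.mem_univ i), Finset.card_univ, Fintype.card_fin,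
      nsmul_eq_mul]
    ring
  have hrowle : D + ((n:ℝ)-1) * E ≤ 1/(n:ℝ) := by
    have hsum : (2:ℝ)/(3*(n:ℝ)) + 1/(3*(n:ℝ)) = 1/(n:ℝ) := by
      rw [← add_div, div_eq_div_iff (by positivity) (by positivity)]
      ring
    linarith [hEn]
  -- main estimate
  have hdiffeq : (∑ i, ∑ j, c i * m i j * c j) - ∑ i, (c i)^2
      = ∑ i, ∑ j, c i * (m i j - if i = j then 1 else 0) * c j := by
    rw [← Finset.sum_sub_distrib]
    refine Finset.sum_congr rfl fun i _ => ?_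
    have h1 : ∑ j, c i * (m i j - if i = j then 1 else 0) * c j
        = (∑ j, c i * m i j * c j) - ∑ j, c i * (if i = j then (1:ℝ) else 0) * c j := by
      rw [← Finset.sum_sub_distrib]
      exact Finset.sum_congr rfl fun j _ => by ring
    rw [h1]
    congr 1
    have h2 : ∀ j : Fin n, c i * (if i = j then (1:ℝ) else 0) * c j
        = if i = j then c i * c j else 0 := by
      intro j; by_cases h : i = j <;> simp [h]
    rw [Finset.sum_congr rfl fun j _ => h2 j, Finset.sum_ite_eq, if_pos (Finset.mem_univ i), sq]
  have hsum1 : |∑ i, ∑ j, c i * (m i j - if i = j then 1 else 0) * c j|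
      ≤ ∑ i, ∑ j, ((c i)^2 + (c j)^2)/2 * e i j := by
    refine (Finset.abs_sum_le_sum_abs _ _).trans ?_
    refine Finset.sum_le_sum fun i _ => ?_
    refine (Finset.abs_sum_le_sum_abs _ _).trans ?_
    exact Finset.sum_le_sum fun j _ => hterm i j
  have h2a : ∑ i, ∑ j, (c j)^2 * e i j = ∑ i, ∑ j, (c i)^2 * e i j := by
    rw [Finset.sum_comm]
    exact Finset.sum_congr rfl fun i _ => Finset.sum_congr rfl fun j _ => by rw [esymm]
  have hsum2 : ∑ i, ∑ j, ((c i)^2 + (c j)^2)/2 * e i j = ∑ i, ∑ j, (c i)^2 * e i j := by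
    have h1 : ∑ i, ∑ j, ((c i)^2 + (c j)^2)/2 * e i j
        = ∑ i, ∑ j, ((c i)^2 * e i j / 2 + (c j)^2 * e i j / 2) := by
      refine Finset.sum_congr rfl fun i _ => Finset.sum_congr rfl fun j _ => by ring
    rw [h1]
    have h2 : ∀ i : Fin n, ∑ j, ((c i)^2 * e i j / 2 + (c j)^2 * e i j / 2)
        = (∑ j, (c i)^2 * e i j)/2 + (∑ j, (c j)^2 * e i j)/2 := by
      intro i
      rw [Finset.sum_add_distrib, Finset.sum_div, Finset.sum_div]
    rw [Finset.sum_congr rfl fun i _ => h2 i, Finset.sum_add_distrib,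
      ← Finset.sum_div, ← Finset.sum_div, h2a]
    ring
  have hsum3 : ∑ i, ∑ j, (c i)^2 * e i j ≤ (1/(n:ℝ)) * ∑ i, (c i)^2 := by
    rw [Finset.mul_sum]
    refine Finset.sum_le_sum fun i _ => ?_
    rw [← Finset.mul_sum, hrow i]
    calc (c i)^2 * (D + ((n:ℝ)-1) * E) ≤ (c i)^2 * (1/(n:ℝ)) :=
          mul_le_mul_of_nonneg_left hrowle (sq_nonneg _)
      _ = 1/(n:ℝ) * (c i)^2 := by ring
  have habs : |(∑ i, ∑ j, c i * m i j * c j) - ∑ i, (c i)^2| ≤ (1/(n:ℝ)) * ∑ i, (c i)^2 := by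
    rw [hdiffeq]
    exact (hsum1.trans_eq hsum2).trans hsum3
  have habs' := abs_le.mp habs
  rw [hQ, hS]
  constructor
  · nlinarith [habs'.1]
  · nlinarith [habs'.2]
end

section
/- Let K be a symmetric n×n real matrix with c₁ I_n ≤ K ≤ c₂ I_n for constants 0 < c₁ ≤ c₂, and let D be a symmetric positive definite n×n real matrix. Then for every β ∈ ℝⁿ, ‖K (K² + D)^{−1} D β‖ ≤ (c₂² / c₁) ‖β‖. -/
open Matrix

lemma psd_symm_dot {n : ℕ} {S : Matrix (Fin n) (Fin n) ℝ} (hS : S.IsHermitian)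
    (u v : Fin n → ℝ) : u ⬝ᵥ (S *ᵥ v) = v ⬝ᵥ (S *ᵥ u) := by
  have hT : Sᵀ = S := by
    have h := hS.eq
    ext i j
    have := congrFun (congrFun h i) j
    simpa using this
  rw [dotProduct_mulVec, ← mulVec_transpose, hT, dotProduct_comm]

lemma psd_cs {n : ℕ} {S : Matrix (Fin n) (Fin n) ℝ} (hS : S.PosSemidef)
    (x y : Fin n → ℝ) :
    (x ⬝ᵥ (S *ᵥ y)) ^ 2 ≤ (x ⬝ᵥ (S *ᵥ x)) * (y ⬝ᵥ (S *ᵥ y)) := by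
  have key : ∀ t : ℝ, 0 ≤ (y ⬝ᵥ (S *ᵥ y)) * (t * t) + (2 * (x ⬝ᵥ (S *ᵥ y))) * t
      + (x ⬝ᵥ (S *ᵥ x)) := by
    intro t
    have h0 := hS.dotProduct_mulVec_nonneg (x + t • y)
    simp only [star_trivial, mulVec_add, mulVec_smul, dotProduct_add, add_dotProduct,
      smul_dotProduct, dotProduct_smul, smul_eq_mul] at h0
    have h1 : y ⬝ᵥ (S *ᵥ x) = x ⬝ᵥ (S *ᵥ y) := psd_symm_dot hS.1 y x
    rw [h1] at h0
    linarith [h0]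
  have := discrim_le_zero key
  rw [discrim] at this
  nlinarith [this]

lemma contraction {n : ℕ} {S : Matrix (Fin n) (Fin n) ℝ} (hS : S.PosSemidef)
    (hS1 : ((1 : Matrix (Fin n) (Fin n) ℝ) - S).PosSemidef) (v : Fin n → ℝ) :
    (S *ᵥ v) ⬝ᵥ (S *ᵥ v) ≤ v ⬝ᵥ v := by
  set a := v ⬝ᵥ (S *ᵥ v) with ha
  set b := (S *ᵥ v) ⬝ᵥ (S *ᵥ v) with hb
  have hb' : b = v ⬝ᵥ (S *ᵥ (S *ᵥ v)) := psd_symm_dot hS.1 (S *ᵥ v) v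
  have hcs := psd_cs hS v (S *ᵥ v)
  have hc_le : (S *ᵥ v) ⬝ᵥ (S *ᵥ (S *ᵥ v)) ≤ b := by
    have h0 := hS1.dotProduct_mulVec_nonneg (S *ᵥ v)
    simp only [star_trivial, sub_mulVec, one_mulVec, dotProduct_sub] at h0
    linarith
  have ha_le : a ≤ v ⬝ᵥ v := by
    have h0 := hS1.dotProduct_mulVec_nonneg v
    simp only [star_trivial, sub_mulVec, one_mulVec, dotProduct_sub] at h0
    linarith
  have hb_nonneg : 0 ≤ b := (by simpa using dotProduct_star_self_nonneg (S *ᵥ v) : (0:ℝ) ≤ b)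
  have ha_nonneg : 0 ≤ a := hS.dotProduct_mulVec_nonneg v
  rw [← hb'] at hcs
  have h2 : b ^ 2 ≤ a * b := le_trans hcs (by nlinarith)
  rcases eq_or_lt_of_le hb_nonneg with h | h
  · linarith [(by simpa using dotProduct_star_self_nonneg v : (0:ℝ) ≤ v ⬝ᵥ v)]
  · nlinarith

lemma smul_psd {n : ℕ} {M : Matrix (Fin n) (Fin n) ℝ} {c : ℝ} (hc : 0 ≤ c)
    (hM : M.PosSemidef) : (c • M).PosSemidef := by
  refine Matrix.PosSemidef.of_dotProduct_mulVec_nonneg ?_ ?_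
  · have h := hM.1.eq
    ext i j
    have := congrFun (congrFun h i) j
    simp only [conjTranspose_apply, star_trivial] at this ⊢
    simp [Matrix.smul_apply, this]
  · intro x
    have := hM.dotProduct_mulVec_nonneg x
    simp only [star_trivial] at this ⊢
    rw [smul_mulVec, dotProduct_smul, smul_eq_mul]
    exact mul_nonneg hc this

/-- If `c₁ Iₙ ≤ K ≤ c₂ Iₙ` (K symmetric, `0 < c₁ ≤ c₂`) and `D` is symmetric positive definite,
then for every `β ∈ ℝⁿ`, `‖K (K² + D)⁻¹ D β‖ ≤ (c₂² / c₁) ‖β‖`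
(Euclidean norms written as square roots of dot products). -/
theorem norm_bound_bias_term (n : ℕ) (K D : Matrix (Fin n) (Fin n) ℝ) (c₁ c₂ : ℝ)
    (hc₁ : 0 < c₁) (hc : c₁ ≤ c₂)
    (hKsymm : K.IsSymm)
    (hK1 : (K - c₁ • (1 : Matrix (Fin n) (Fin n) ℝ)).PosSemidef)
    (hK2 : (c₂ • (1 : Matrix (Fin n) (Fin n) ℝ) - K).PosSemidef)
    (hD : D.PosDef) :
    ∀ β : Fin n → ℝ,
      Real.sqrt ((K *ᵥ ((K ^ 2 + D)⁻¹ *ᵥ (D *ᵥ β))) ⬝ᵥ (K *ᵥ ((K ^ 2 + D)⁻¹ *ᵥ (D *ᵥ β)))) ≤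
        c₂ ^ 2 / c₁ * Real.sqrt (β ⬝ᵥ β) := by
  intro β
  have hc₂ : (0:ℝ) < c₂ := lt_of_lt_of_le hc₁ hc
  have hKH : Kᴴ = K := by
    ext i j
    simp only [conjTranspose_apply, star_trivial]
    exact congrFun (congrFun hKsymm.eq i) j
  have hKherm : K.IsHermitian := hKH
  -- K is PSD
  have hKpsd : K.PosSemidef := by
    have h1 : (c₁ • (1 : Matrix (Fin n) (Fin n) ℝ)).PosSemidef :=
      smul_psd hc₁.le Matrix.PosSemidef.one
    have := hK1.add h1
    simpa using this
  -- K^2 is PSD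
  have hK2psd : (K ^ 2).PosSemidef := by
    have := Matrix.posSemidef_conjTranspose_mul_self K
    rwa [hKH, ← pow_two] at this
  set A := K ^ 2 + D with hA_def
  have hApd : A.PosDef := Matrix.PosDef.posSemidef_add hK2psd hD
  have hAunit : IsUnit A.det := hApd.det_pos.ne'.isUnit
  have hAinv : A⁻¹.PosDef := hApd.inv
  have hAherm : A.IsHermitian := hApd.1
  -- B = K A⁻¹ K
  set B := K * A⁻¹ * K with hB_def
  have hBpsd : B.PosSemidef := by
    have := hAinv.posSemidef.conjTranspose_mul_mul_same K
    rwa [hKH] at this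
  -- 1 - B is PSD
  have hB_le : ((1 : Matrix (Fin n) (Fin n) ℝ) - B).PosSemidef := by
    refine Matrix.PosSemidef.of_dotProduct_mulVec_nonneg ?_ ?_
    · exact (Matrix.isHermitian_one).sub hBpsd.1
    · intro x
      simp only [star_trivial, sub_mulVec, one_mulVec, dotProduct_sub, sub_nonneg]
      set w := A⁻¹ *ᵥ (K *ᵥ x) with hw
      have hAw : A *ᵥ w = K *ᵥ x := by
        rw [hw, mulVec_mulVec, Matrix.mul_nonsing_inv A hAunit, one_mulVec]
      set t := w ⬝ᵥ (A *ᵥ w) with ht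
      have e1 : x ⬝ᵥ (B *ᵥ x) = t := by
        rw [hB_def, ← mulVec_mulVec, ← mulVec_mulVec, psd_symm_dot hKherm x (A⁻¹ *ᵥ (K *ᵥ x)),
          ← hw, ht, hAw]
      have ht0 : 0 ≤ t := hApd.posSemidef.dotProduct_mulVec_nonneg w
      have e2 : t = (K *ᵥ w) ⬝ᵥ x := by
        rw [ht, hAw, psd_symm_dot hKherm w x, dotProduct_comm]
      have e3 : (K *ᵥ w) ⬝ᵥ (K *ᵥ w) ≤ t := by
        have hdw : 0 ≤ w ⬝ᵥ (D *ᵥ w) := hD.posSemidef.dotProduct_mulVec_nonneg w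
        have hsplit : w ⬝ᵥ (A *ᵥ w) = w ⬝ᵥ (K ^ 2 *ᵥ w) + w ⬝ᵥ (D *ᵥ w) := by
          rw [hA_def, add_mulVec, dotProduct_add]
        have hKK : (K *ᵥ w) ⬝ᵥ (K *ᵥ w) = w ⬝ᵥ (K ^ 2 *ᵥ w) := by
          rw [psd_symm_dot hKherm (K *ᵥ w) w, mulVec_mulVec, ← pow_two]
        rw [hKK, ht, hsplit]
        linarith
      have hcs := psd_cs (Matrix.PosSemidef.one (R := ℝ) (n := Fin n)) (K *ᵥ w) x
      simp only [one_mulVec] at hcs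
      rw [← e2] at hcs
      -- hcs : t ^ 2 ≤ ((K*ᵥw) ⬝ᵥ (K*ᵥw)) * (x ⬝ᵥ x)
      rw [e1]
      have hx : (0:ℝ) ≤ x ⬝ᵥ x := by simpa using dotProduct_star_self_nonneg x
      rcases eq_or_lt_of_le ht0 with h | h
      · rw [← h]
        exact hx
      · nlinarith [mul_le_mul_of_nonneg_right e3 hx]
  -- rewrite the target vector
  have hTeq : K *ᵥ (A⁻¹ *ᵥ (D *ᵥ β)) =
      ((1 : Matrix (Fin n) (Fin n) ℝ) - B) *ᵥ (K *ᵥ β) := by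
    have hDeq : D = A - K ^ 2 := by rw [hA_def]; abel
    calc K *ᵥ (A⁻¹ *ᵥ (D *ᵥ β)) = (K * A⁻¹ * D) *ᵥ β := by
          rw [mulVec_mulVec, mulVec_mulVec, Matrix.mul_assoc]
      _ = ((1 - B) * K) *ᵥ β := by
          rw [hDeq, hB_def]
          rw [Matrix.mul_sub, Matrix.mul_assoc K A⁻¹ A, Matrix.nonsing_inv_mul A hAunit]
          rw [Matrix.sub_mul, Matrix.one_mul]
          rw [Matrix.mul_one, pow_two, ← Matrix.mul_assoc]
      _ = ((1 : Matrix (Fin n) (Fin n) ℝ) - B) *ᵥ (K *ᵥ β) := by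
          rw [← mulVec_mulVec]
  have hB2 : ((1 : Matrix (Fin n) (Fin n) ℝ) - ((1 : Matrix (Fin n) (Fin n) ℝ) - B)).PosSemidef := by
    simpa using hBpsd
  have step1 : (K *ᵥ (A⁻¹ *ᵥ (D *ᵥ β))) ⬝ᵥ (K *ᵥ (A⁻¹ *ᵥ (D *ᵥ β))) ≤ (K *ᵥ β) ⬝ᵥ (K *ᵥ β) := by
    rw [hTeq]
    exact contraction hB_le hB2 (K *ᵥ β)
  -- ‖Kβ‖² ≤ c₂² ‖β‖²
  have step2 : (K *ᵥ β) ⬝ᵥ (K *ᵥ β) ≤ c₂ ^ 2 * (β ⬝ᵥ β) := by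
    have hS : (c₂⁻¹ • K).PosSemidef := smul_psd (by positivity) hKpsd
    have hS1 : ((1 : Matrix (Fin n) (Fin n) ℝ) - c₂⁻¹ • K).PosSemidef := by
      have := smul_psd (c := c₂⁻¹) (by positivity) hK2
      rwa [smul_sub, smul_smul, inv_mul_cancel₀ hc₂.ne', one_smul] at this
    have := contraction hS hS1 β
    rw [smul_mulVec] at this
    simp only [smul_dotProduct, dotProduct_smul, smul_eq_mul] at this
    have h4 : c₂⁻¹ * (c₂⁻¹ * ((K *ᵥ β) ⬝ᵥ (K *ᵥ β))) ≤ β ⬝ᵥ β := this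
    have h5 := mul_le_mul_of_nonneg_left h4 (le_of_lt (by positivity : (0:ℝ) < c₂ ^ 2))
    have h6 : c₂ ^ 2 * (c₂⁻¹ * (c₂⁻¹ * ((K *ᵥ β) ⬝ᵥ (K *ᵥ β)))) = (K *ᵥ β) ⬝ᵥ (K *ᵥ β) := by
      field_simp
    linarith
  have hfinal : (K *ᵥ (A⁻¹ *ᵥ (D *ᵥ β))) ⬝ᵥ (K *ᵥ (A⁻¹ *ᵥ (D *ᵥ β))) ≤ c₂ ^ 2 * (β ⬝ᵥ β) :=
    le_trans step1 step2
  calc Real.sqrt ((K *ᵥ (A⁻¹ *ᵥ (D *ᵥ β))) ⬝ᵥ (K *ᵥ (A⁻¹ *ᵥ (D *ᵥ β))))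
      ≤ Real.sqrt (c₂ ^ 2 * (β ⬝ᵥ β)) := Real.sqrt_le_sqrt hfinal
    _ = c₂ * Real.sqrt (β ⬝ᵥ β) := by
        rw [Real.sqrt_mul (by positivity), Real.sqrt_sq hc₂.le]
    _ ≤ c₂ ^ 2 / c₁ * Real.sqrt (β ⬝ᵥ β) := by
        apply mul_le_mul_of_nonneg_right _ (Real.sqrt_nonneg _)
        rw [le_div_iff₀ hc₁]
        nlinarith
end

section
/- Let K be a symmetric n×n real matrix with c₁ I_n ≤ K ≤ c₂ I_n for constants 0 < c₁ ≤ c₂, and let D be a symmetric positive definite n×n real matrix. Then for every β ∈ ℝⁿ, ‖K (K² + D)^{−1} K² β‖ ≤ (c₂² / c₁) ‖β‖. -/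
open Matrix

section Aux

variable {n : ℕ}

lemma dp_self_nonneg (x : Fin n → ℝ) : 0 ≤ x ⬝ᵥ x :=
  Finset.sum_nonneg fun i _ => mul_self_nonneg _

/-- quadratic form inequality from PSD of a difference -/
lemma psd_quad_le {A B : Matrix (Fin n) (Fin n) ℝ} (h : (B - A).PosSemidef)
    (x : Fin n → ℝ) : x ⬝ᵥ (A *ᵥ x) ≤ x ⬝ᵥ (B *ᵥ x) := by
  have := h.dotProduct_mulVec_nonneg x
  simp only [star_trivial, sub_mulVec, dotProduct_sub] at this
  linarith

end Aux

/-- If `c₁ Iₙ ≤ K ≤ c₂ Iₙ` (K symmetric, `0 < c₁ ≤ c₂`) and `D` is symmetric positive definite,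
then for every `β ∈ ℝⁿ`, `‖K (K² + D)⁻¹ K² β‖ ≤ (c₂² / c₁) ‖β‖`
(Euclidean norms written as square roots of dot products). -/
theorem norm_bound_signal_term (n : ℕ) (K D : Matrix (Fin n) (Fin n) ℝ) (c₁ c₂ : ℝ)
    (hc₁ : 0 < c₁) (hc : c₁ ≤ c₂)
    (hKsymm : K.IsSymm)
    (hK1 : (K - c₁ • (1 : Matrix (Fin n) (Fin n) ℝ)).PosSemidef)
    (hK2 : (c₂ • (1 : Matrix (Fin n) (Fin n) ℝ) - K).PosSemidef)
    (hD : D.PosDef) :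
    ∀ β : Fin n → ℝ,
      Real.sqrt ((K *ᵥ ((K ^ 2 + D)⁻¹ *ᵥ (K ^ 2 *ᵥ β))) ⬝ᵥ
          (K *ᵥ ((K ^ 2 + D)⁻¹ *ᵥ (K ^ 2 *ᵥ β)))) ≤
        c₂ ^ 2 / c₁ * Real.sqrt (β ⬝ᵥ β) := by
  intro β
  have hc₂ : 0 < c₂ := lt_of_lt_of_le hc₁ hc
  set M : Matrix (Fin n) (Fin n) ℝ := K ^ 2 + D with hMdef
  have hKt : Kᵀ = K := hKsymm
  -- K is positive semidefinite
  have h1pd : (c₁ • (1 : Matrix (Fin n) (Fin n) ℝ)).PosDef := by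
    refine Matrix.PosDef.of_dotProduct_mulVec_pos ?_ (fun x hx => ?_)
    · simp [Matrix.IsHermitian]
    · have hxx : 0 < x ⬝ᵥ x := by
        have := dotProduct_star_self_pos_iff (v := x) |>.mpr hx
        simpa using this
      simpa [smul_mulVec, dotProduct_smul] using mul_pos hc₁ hxx
  have hKpd : K.PosDef := by
    have := Matrix.PosDef.posSemidef_add hK1 h1pd
    simpa using this
  have hKpsd : K.PosSemidef := hKpd.posSemidef
  have hKher : Kᴴ = K := hKpsd.isHermitian
  -- M is positive definite
  have hMpd : M.PosDef := Matrix.PosDef.posSemidef_add (hKpsd.pow 2) hD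
  have hMinv : (M⁻¹).PosDef := hMpd.inv
  have hMiher : (M⁻¹)ᴴ = M⁻¹ := hMinv.isHermitian
  have hMdet : IsUnit M.det := hMpd.det_pos.ne'.isUnit
  have hMM' : M * M⁻¹ = 1 := Matrix.mul_nonsing_inv M hMdet
  set T : Matrix (Fin n) (Fin n) ℝ := K * M⁻¹ * K with hTdef
  have hTpsd : T.PosSemidef := by
    have := hMinv.posSemidef.mul_mul_conjTranspose_same K
    rwa [hKher] at this
  have hTher : Tᴴ = T := hTpsd.isHermitian
  have hTt : Tᵀ = T := by
    rw [← conjTranspose_eq_transpose_of_trivial, hTher]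
  -- T - T*T is PSD
  have hTT : (T - T * T).PosSemidef := by
    have h0 := hD.posSemidef.mul_mul_conjTranspose_same M⁻¹
    rw [hMiher] at h0
    have hDe : D = M - K ^ 2 := by rw [hMdef]; abel
    have h1 : M⁻¹ * D * M⁻¹ = M⁻¹ - M⁻¹ * K ^ 2 * M⁻¹ := by
      rw [hDe, mul_sub, sub_mul, mul_assoc M⁻¹ M M⁻¹, hMM', mul_one]
    rw [h1] at h0
    have h2 := h0.mul_mul_conjTranspose_same K
    rw [hKher] at h2
    have he : K * (M⁻¹ - M⁻¹ * K ^ 2 * M⁻¹) * K = T - T * T := by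
      rw [hTdef, pow_two]
      simp only [mul_sub, sub_mul, Matrix.mul_assoc]
    rwa [he] at h2
  set y : Fin n → ℝ := K *ᵥ β with hy
  set v : Fin n → ℝ := T *ᵥ y with hv
  -- the goal vector is v
  have hvec : K *ᵥ ((K ^ 2 + D)⁻¹ *ᵥ (K ^ 2 *ᵥ β)) = v := by
    rw [hv, hy, hTdef, ← hMdef]
    rw [mulVec_mulVec, mulVec_mulVec, mulVec_mulVec, pow_two]
    congr 1
    simp only [Matrix.mul_assoc]
  rw [hvec]
  -- step 1: v ⬝ᵥ v ≤ y ⬝ᵥ v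
  have hvv : v ⬝ᵥ v ≤ y ⬝ᵥ v := by
    have h := psd_quad_le hTT y
    have hTTy : y ⬝ᵥ ((T * T) *ᵥ y) = v ⬝ᵥ v := by
      rw [← mulVec_mulVec, ← hv, dotProduct_mulVec, ← mulVec_transpose, hTt, ← hv]
    rwa [hTTy] at h
  -- step 2: Cauchy-Schwarz
  have h3 : (y ⬝ᵥ v) * (y ⬝ᵥ v) ≤ (y ⬝ᵥ y) * (v ⬝ᵥ v) := by
    have h := Finset.sum_mul_sq_le_sq_mul_sq Finset.univ y v
    simpa only [dotProduct, pow_two] using h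
  have hcs : y ⬝ᵥ v ≤ Real.sqrt (y ⬝ᵥ y) * Real.sqrt (v ⬝ᵥ v) := by
    calc y ⬝ᵥ v ≤ |y ⬝ᵥ v| := le_abs_self _
      _ = Real.sqrt ((y ⬝ᵥ v) * (y ⬝ᵥ v)) := (Real.sqrt_mul_self_eq_abs _).symm
      _ ≤ Real.sqrt ((y ⬝ᵥ y) * (v ⬝ᵥ v)) := Real.sqrt_le_sqrt h3
      _ = Real.sqrt (y ⬝ᵥ y) * Real.sqrt (v ⬝ᵥ v) := Real.sqrt_mul (dp_self_nonneg y) _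
  -- conclude √(v⬝v) ≤ √(y⬝y)
  have hvy : Real.sqrt (v ⬝ᵥ v) ≤ Real.sqrt (y ⬝ᵥ y) := by
    set a := Real.sqrt (v ⬝ᵥ v) with ha
    set b := Real.sqrt (y ⬝ᵥ y) with hb
    have ha2 : a ^ 2 = v ⬝ᵥ v := Real.sq_sqrt (dp_self_nonneg v)
    have han : 0 ≤ a := Real.sqrt_nonneg _
    have hbn : 0 ≤ b := Real.sqrt_nonneg _
    rcases eq_or_lt_of_le han with h0 | h0
    · rw [← h0]; exact hbn
    · have : a * a ≤ b * a := by
        calc a * a = a ^ 2 := (pow_two a).symm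
          _ = v ⬝ᵥ v := ha2
          _ ≤ y ⬝ᵥ v := hvv
          _ ≤ b * a := hcs
      exact le_of_mul_le_mul_right this h0
  -- step 3: y ⬝ᵥ y ≤ c₂² (β ⬝ᵥ β)
  have hyy : y ⬝ᵥ y ≤ c₂ ^ 2 * (β ⬝ᵥ β) := by
    have hKy : β ⬝ᵥ ((K ^ 2) *ᵥ β) = y ⬝ᵥ y := by
      rw [pow_two, ← mulVec_mulVec, dotProduct_mulVec, ← mulVec_transpose, hKt, hy]
    -- K² ≤ c₂ K via sqrt congruence
    have hsq : (c₂ • K - K ^ 2).PosSemidef := by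
      obtain ⟨S, hSher, hSS⟩ : ∃ S : Matrix (Fin n) (Fin n) ℝ, Sᴴ = S ∧ S * S = K :=
        (by
          classical
          open scoped MatrixOrder in
          obtain ⟨X, hX, -, hXK⟩ := CFC.exists_sqrt_of_isSelfAdjoint_of_quasispectrumRestricts
            hKpsd.isHermitian (QuasispectrumRestricts.nnreal_of_nonneg hKpsd.nonneg)
          exact ⟨X, hX, hXK⟩)
      have h := hK2.mul_mul_conjTranspose_same S
      rw [hSher] at h
      have he : S * (c₂ • 1 - K) * S = c₂ • K - K ^ 2 := by
        rw [mul_sub, sub_mul, Matrix.mul_smul, mul_one, Matrix.smul_mul, hSS]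
        congr 1
        calc S * K * S = S * (S * S) * S := by rw [hSS]
          _ = K ^ 2 := by rw [pow_two, ← hSS]; simp only [Matrix.mul_assoc]
      rwa [he] at h
    have h1 : β ⬝ᵥ (K ^ 2 *ᵥ β) ≤ c₂ * (β ⬝ᵥ (K *ᵥ β)) := by
      have := psd_quad_le hsq β
      simpa [smul_mulVec, dotProduct_smul] using this
    have h2 : β ⬝ᵥ (K *ᵥ β) ≤ c₂ * (β ⬝ᵥ β) := by
      have := psd_quad_le hK2 β
      simpa [smul_mulVec, dotProduct_smul] using this
    calc y ⬝ᵥ y = β ⬝ᵥ (K ^ 2 *ᵥ β) := hKy.symm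
      _ ≤ c₂ * (β ⬝ᵥ (K *ᵥ β)) := h1
      _ ≤ c₂ * (c₂ * (β ⬝ᵥ β)) := by nlinarith
      _ = c₂ ^ 2 * (β ⬝ᵥ β) := by ring
  -- combine
  have hyb : Real.sqrt (y ⬝ᵥ y) ≤ c₂ * Real.sqrt (β ⬝ᵥ β) := by
    have := Real.sqrt_le_sqrt hyy
    rwa [Real.sqrt_mul (by positivity), Real.sqrt_sq hc₂.le] at this
  have hfin : c₂ * Real.sqrt (β ⬝ᵥ β) ≤ c₂ ^ 2 / c₁ * Real.sqrt (β ⬝ᵥ β) := by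
    apply mul_le_mul_of_nonneg_right _ (Real.sqrt_nonneg _)
    rw [le_div_iff₀ hc₁]
    nlinarith
  calc Real.sqrt (v ⬝ᵥ v) ≤ Real.sqrt (y ⬝ᵥ y) := hvy
    _ ≤ c₂ * Real.sqrt (β ⬝ᵥ β) := hyb
    _ ≤ c₂ ^ 2 / c₁ * Real.sqrt (β ⬝ᵥ β) := hfin
end

section
/- Let K be a symmetric n×n real matrix with K ≥ t₁ I_n for some t₁ > 0, and let D be a symmetric positive definite n×n real matrix. Then for every β ∈ ℝⁿ, ‖(K² + D)^{−1} D β‖² ≤ t₁^{−2} βᵀ D β. -/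
open Matrix

/-- If `K ≥ t₁ Iₙ` (K symmetric, `t₁ > 0`) and `D` is symmetric positive definite, then for
every `β ∈ ℝⁿ`, `‖(K² + D)⁻¹ D β‖² ≤ t₁⁻² βᵀ D β`. -/
theorem sq_norm_bound_shrinkage_term (n : ℕ) (K D : Matrix (Fin n) (Fin n) ℝ) (t₁ : ℝ)
    (ht₁ : 0 < t₁)
    (hKsymm : K.IsSymm)
    (hK : (K - t₁ • (1 : Matrix (Fin n) (Fin n) ℝ)).PosSemidef)
    (hD : D.PosDef) :
    ∀ β : Fin n → ℝ,
      (((K ^ 2 + D)⁻¹ *ᵥ (D *ᵥ β)) ⬝ᵥ ((K ^ 2 + D)⁻¹ *ᵥ (D *ᵥ β))) ≤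
        t₁⁻¹ ^ 2 * (β ⬝ᵥ (D *ᵥ β)) := by
  intro β
  -- K² is PSD
  have hK2 : (K ^ 2).PosSemidef := by
    have := Matrix.posSemidef_conjTranspose_mul_self K
    have hKT : Kᴴ = K := by
      rw [Matrix.conjTranspose_eq_transpose_of_trivial]; exact hKsymm.eq
    rw [hKT] at this
    simpa [sq] using this
  have hM : (K ^ 2 + D).PosDef := by rw [add_comm]; exact hD.add_posSemidef hK2
  set M := K ^ 2 + D with hMdef
  set x : Fin n → ℝ := M⁻¹ *ᵥ (D *ᵥ β) with hx
  have hMinv : M * M⁻¹ = 1 := Matrix.mul_nonsing_inv M (isUnit_iff_ne_zero.2 hM.det_pos.ne')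
  have hMx : M *ᵥ x = D *ᵥ β := by
    rw [hx, Matrix.mulVec_mulVec, hMinv, Matrix.one_mulVec]
  -- dot product facts
  have hsymmdot : ∀ v : Fin n → ℝ, x ⬝ᵥ (K *ᵥ v) = (K *ᵥ x) ⬝ᵥ v := by
    intro v
    rw [Matrix.dotProduct_mulVec, ← Matrix.mulVec_transpose, hKsymm.eq]
  have hKx : x ⬝ᵥ (K ^ 2 *ᵥ x) = (K *ᵥ x) ⬝ᵥ (K *ᵥ x) := by
    have : K ^ 2 *ᵥ x = K *ᵥ (K *ᵥ x) := by rw [sq, ← Matrix.mulVec_mulVec]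
    rw [this, hsymmdot]
  -- from hK : x ⬝ᵥ K x ≥ t₁ * (x ⬝ᵥ x)
  have h1 : t₁ * (x ⬝ᵥ x) ≤ x ⬝ᵥ (K *ᵥ x) := by
    have := hK.dotProduct_mulVec_nonneg x
    simp only [star_trivial, Matrix.sub_mulVec, Matrix.smul_mulVec,
      Matrix.one_mulVec, dotProduct_sub, dotProduct_smul,
      smul_eq_mul] at this
    linarith
  -- Cauchy-Schwarz
  have hcs : (x ⬝ᵥ (K *ᵥ x)) ^ 2 ≤ (x ⬝ᵥ x) * ((K *ᵥ x) ⬝ᵥ (K *ᵥ x)) := by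
    have := Finset.sum_mul_sq_le_sq_mul_sq Finset.univ x (K *ᵥ x)
    simpa [dotProduct, sq, mul_comm, mul_left_comm, mul_assoc] using this
  have hxx : 0 ≤ x ⬝ᵥ x := by
    have := Finset.sum_nonneg (fun i (_ : i ∈ Finset.univ) => mul_self_nonneg (x i))
    simpa [dotProduct] using this
  have hKxKx : 0 ≤ (K *ᵥ x) ⬝ᵥ (K *ᵥ x) := by
    have := Finset.sum_nonneg (fun i (_ : i ∈ Finset.univ) => mul_self_nonneg ((K *ᵥ x) i))
    simpa [dotProduct] using this
  -- K² lower bound: t₁² (x⬝x) ≤ x ⬝ K² x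
  have hK2lb : t₁ ^ 2 * (x ⬝ᵥ x) ≤ x ⬝ᵥ (K ^ 2 *ᵥ x) := by
    rw [hKx]
    rcases eq_or_lt_of_le hxx with h | h
    · -- x ⬝ x = 0
      have hx0 : t₁ * (x ⬝ᵥ x) ≤ x ⬝ᵥ (K *ᵥ x) := h1
      nlinarith [sq_nonneg (x ⬝ᵥ (K *ᵥ x))]
    · have h2 : (t₁ * (x ⬝ᵥ x)) ^ 2 ≤ (x ⬝ᵥ (K *ᵥ x)) ^ 2 := by
        have hnn : 0 ≤ t₁ * (x ⬝ᵥ x) := by positivity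
        nlinarith
      nlinarith
  -- D facts
  have hDpsd := hD.posSemidef
  have hDxx : 0 ≤ x ⬝ᵥ (D *ᵥ x) := by simpa using hDpsd.dotProduct_mulVec_nonneg x
  have hDsub : 0 ≤ (x - β) ⬝ᵥ (D *ᵥ (x - β)) := by simpa using hDpsd.dotProduct_mulVec_nonneg (x - β)
  have hDsymm : x ⬝ᵥ (D *ᵥ β) = β ⬝ᵥ (D *ᵥ x) := by
    have hDT : Dᵀ = D := hD.isHermitian
    rw [Matrix.dotProduct_mulVec, ← Matrix.mulVec_transpose, hDT, dotProduct_comm]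
  have hexp : (x - β) ⬝ᵥ (D *ᵥ (x - β)) =
      x ⬝ᵥ (D *ᵥ x) - 2 * (x ⬝ᵥ (D *ᵥ β)) + β ⬝ᵥ (D *ᵥ β) := by
    simp only [Matrix.mulVec_sub, sub_dotProduct, dotProduct_sub]
    rw [← hDsymm]; ring
  -- combine: x ⬝ M x = x ⬝ D β
  have hMxx : x ⬝ᵥ (K ^ 2 *ᵥ x) + x ⬝ᵥ (D *ᵥ x) = x ⬝ᵥ (D *ᵥ β) := by
    have : x ⬝ᵥ (M *ᵥ x) = x ⬝ᵥ (D *ᵥ β) := by rw [hMx]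
    rw [hMdef, Matrix.add_mulVec, dotProduct_add] at this
    exact this
  -- final
  have key : t₁ ^ 2 * (x ⬝ᵥ x) ≤ β ⬝ᵥ (D *ᵥ β) := by nlinarith
  have ht2 : (0:ℝ) < t₁ ^ 2 := by positivity
  rw [inv_pow]
  rw [inv_mul_eq_div, le_div_iff₀ ht2, mul_comm]
  exact key
end
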